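/- For any random variable Y with mean μ_b and standard deviation σ_b, and any 1 ≤ k ≤ n, the expected k-th order statistic of n i.i.d. copies of Y satisfies E[Y_{k:n}] ≤ μ_b + σ_b·√((k-1)n/(n-k+1))·(1/√n) — in particular E[Y_{n:n}] ≤ μ_b + σ_b·√(n-1). -/

import Mathlib

open MeasureTheory ProbabilityTheory

/-- The `k`-th order statistic (the `k`-th smallest value) of the family `Y`. -/
noncomputable def orderStat {Ω : Type*} {n : ℕ} (l : ℕ) (Y : Fin n → Ω → ℝ) (ω : Ω) : ℝ :=
  ((List.ofFn (fun i => Y i ω)).insertionSort (· ≤ ·)).getD (l - 1) 0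

section helpers
variable {Ω : Type*} {n : ℕ} (Y : Fin n → Ω → ℝ) (ω : Ω)

lemma os_len : ((List.ofFn (fun i => Y i ω)).insertionSort (· ≤ ·)).length = n := by
  rw [(List.perm_insertionSort _ _).length_eq, List.length_ofFn]

lemma os_eq_get {k : ℕ} (hk : 1 ≤ k) (hkn : k ≤ n) :
    orderStat k Y ω = ((List.ofFn (fun i => Y i ω)).insertionSort (· ≤ ·)).get
      ⟨k - 1, by rw [os_len]; omega⟩ := by
  rw [orderStat, List.getD_eq_getElem _ _ (by rw [os_len]; omega)]
  simp

lemma os_mem {k : ℕ} (hk : 1 ≤ k) (hkn : k ≤ n) : ∃ i, orderStat k Y ω = Y i ω := by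
  rw [os_eq_get Y ω hk hkn]
  have hx : ((List.ofFn (fun i => Y i ω)).insertionSort (· ≤ ·)).get
      ⟨k - 1, by rw [os_len]; omega⟩ ∈ (List.ofFn (fun i => Y i ω)).insertionSort (· ≤ ·) :=
    List.get_mem _ _
  have := ((List.perm_insertionSort (· ≤ ·) (List.ofFn fun i => Y i ω)).mem_iff).mp hx
  rw [List.mem_ofFn] at this
  obtain ⟨i, hi⟩ := this
  exact ⟨i, hi.symm⟩

lemma os_abs_le {k : ℕ} (hk : 1 ≤ k) (hkn : k ≤ n) :
    |orderStat k Y ω| ≤ ∑ i, |Y i ω| := by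
  obtain ⟨i, hi⟩ := os_mem Y ω hk hkn
  rw [hi]
  exact Finset.single_le_sum (f := fun i => |Y i ω|) (fun _ _ => abs_nonneg _) (Finset.mem_univ i)

lemma os_one_le (i : Fin n) : orderStat 1 Y ω ≤ Y i ω := by
  have hn : 0 < n := i.pos
  have hmem : Y i ω ∈ (List.ofFn (fun i => Y i ω)).insertionSort (· ≤ ·) := by
    rw [(List.perm_insertionSort (· ≤ ·) _).mem_iff, List.mem_ofFn]
    exact ⟨i, rfl⟩
  obtain ⟨j, hj⟩ := List.get_of_mem hmem
  rw [os_eq_get Y ω le_rfl hn, ← hj]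
  exact (List.pairwise_insertionSort _ _).rel_get_of_le (Fin.mk_le_mk.mpr (Nat.zero_le _))

lemma os_key (t : ℝ) {k : ℕ} (hk : 1 ≤ k) (hkn : k ≤ n) :
    orderStat k Y ω ≤ t + (((n : ℝ) - k + 1))⁻¹ * ∑ i, max (Y i ω - t) 0 := by
  set s := (List.ofFn (fun i => Y i ω)).insertionSort (· ≤ ·) with hs
  have hlen : s.length = n := os_len Y ω
  have hkR : (k:ℝ) ≤ n := by exact_mod_cast hkn
  have hpos : (0:ℝ) < (n : ℝ) - k + 1 := by linarith
  set g : ℝ → ℝ := fun x => max (x - t) 0 with hg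
  have hgnn : ∀ x, 0 ≤ g x := fun x => le_max_right _ _
  have hsum : ∑ i, g (Y i ω) = (s.map g).sum := by
    have h1 : ((List.ofFn (fun i => Y i ω)).map g).sum = (s.map g).sum :=
      ((List.perm_insertionSort (· ≤ ·) _).map _).sum_eq.symm
    rw [List.map_ofFn, List.sum_ofFn] at h1
    exact h1
  set m0 := orderStat k Y ω with hm0
  rcases le_or_gt m0 t with h | h
  · have : 0 ≤ (((n : ℝ) - k + 1))⁻¹ * ∑ i, g (Y i ω) := by
      apply mul_nonneg (by positivity)
      exact Finset.sum_nonneg fun i _ => hgnn _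
    linarith
  · have hget : m0 = s.get ⟨k - 1, by omega⟩ := os_eq_get Y ω hk hkn
    have hdrop : ∀ x ∈ s.drop (k-1), m0 ≤ x := by
      intro x hx
      obtain ⟨j, hj⟩ := List.get_of_mem hx
      have hjlt : (k-1) + (j:ℕ) < s.length := by
        have := j.isLt
        simp only [List.length_drop] at this
        omega
      have hxe : x = s.get ⟨(k-1) + (j:ℕ), hjlt⟩ := by
        rw [← hj]; simp
      rw [hxe, hget]
      exact (List.pairwise_insertionSort _ _).rel_get_of_le (by simp)
    have hdlen : (s.drop (k-1)).length = n - (k-1) := by rw [List.length_drop, hlen]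
    have hdsum : ((s.drop (k-1)).map g).sum ≥ (n - (k-1) : ℕ) • (m0 - t) := by
      have hb : ∀ x ∈ (s.drop (k-1)).map g, (m0 - t) ≤ x := by
        intro x hx
        rw [List.mem_map] at hx
        obtain ⟨y, hy, rfl⟩ := hx
        have := hdrop y hy
        simp only [hg]
        exact le_max_of_le_left (by linarith)
      have := List.card_nsmul_le_sum _ (m0 - t) hb
      rwa [List.length_map, hdlen] at this
    have htsum : 0 ≤ ((s.take (k-1)).map g).sum :=
      List.sum_nonneg (by intro x hx; rw [List.mem_map] at hx; obtain ⟨y,_,rfl⟩ := hx; exact hgnn y)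
    have hsplit : (s.map g).sum = ((s.take (k-1)).map g).sum + ((s.drop (k-1)).map g).sum := by
      conv_lhs => rw [← List.take_append_drop (k-1) s]
      rw [List.map_append, List.sum_append]
    have hcast : ((n - (k-1) : ℕ) : ℝ) = (n : ℝ) - k + 1 := by
      rw [Nat.cast_sub (by omega : k - 1 ≤ n), Nat.cast_sub hk]
      push_cast; ring
    have hbig : ((n : ℝ) - k + 1) * (m0 - t) ≤ ∑ i, g (Y i ω) := by
      rw [hsum, hsplit]
      have : ((n - (k-1) : ℕ) : ℝ) * (m0 - t) ≤ ((s.drop (k-1)).map g).sum := by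
        rw [← nsmul_eq_mul]; exact hdsum
      rw [hcast] at this
      linarith
    have h2 : m0 - t ≤ ((n:ℝ) - k + 1)⁻¹ * ∑ i, g (Y i ω) := by
      rw [← div_eq_inv_mul, le_div_iff₀ hpos]
      nlinarith [hbig]
    have h3 : ∑ i, g (Y i ω) = ∑ i, max (Y i ω - t) 0 := rfl
    rw [h3] at h2
    linarith

lemma sorted_get_le_iff (s : List ℝ) (hs : s.Pairwise (· ≤ ·)) (i : ℕ) (hi : i < s.length) (t : ℝ) :
    s.get ⟨i, hi⟩ ≤ t ↔ i + 1 ≤ s.countP (fun x => decide (x ≤ t)) := by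
  set p : ℝ → Bool := fun x => decide (x ≤ t) with hp
  constructor
  · intro h
    have hsplit : s.countP p = (s.take (i+1)).countP p + (s.drop (i+1)).countP p := by
      conv_lhs => rw [← List.take_append_drop (i+1) s]
      rw [List.countP_append]
    have htake : (s.take (i+1)).countP p = i + 1 := by
      rw [List.countP_eq_length.mpr, List.length_take, min_eq_left (by omega)]
      intro a ha
      obtain ⟨j, hj⟩ := List.get_of_mem ha
      have hjl : (j : ℕ) < i + 1 := by
        have h2 := j.isLt; simp only [List.length_take] at h2; omega
      have hjs : (j : ℕ) < s.length := by omega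
      have : a = s.get ⟨j, hjs⟩ := by rw [← hj]; simp
      rw [hp]
      simp only [decide_eq_true_eq]
      rw [this]
      calc s.get ⟨j, hjs⟩ ≤ s.get ⟨i, hi⟩ :=
            hs.rel_get_of_le (by simp [Fin.le_def]; omega)
        _ ≤ t := h
    omega
  · intro h
    by_contra hc
    push_neg at hc
    have hdrop : (s.drop i).countP p = 0 := by
      rw [List.countP_eq_zero]
      intro a ha
      obtain ⟨j, hj⟩ := List.get_of_mem ha
      have hjl : i + (j:ℕ) < s.length := by
        have h2 := j.isLt; simp only [List.length_drop] at h2; omega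
      have : a = s.get ⟨i + j, hjl⟩ := by rw [← hj]; simp
      have hle : s.get ⟨i, hi⟩ ≤ s.get ⟨i + j, hjl⟩ :=
        hs.rel_get_of_le (by simp [Fin.le_def])
      rw [hp]; simp only [decide_eq_true_eq]
      rw [this]; push_neg; linarith
    have hsplit : s.countP p = (s.take i).countP p + (s.drop i).countP p := by
      conv_lhs => rw [← List.take_append_drop i s]
      rw [List.countP_append]
    have htl : (s.take i).countP p ≤ i := by
      calc (s.take i).countP p ≤ (s.take i).length := List.countP_le_length
        _ ≤ i := by rw [List.length_take]; omega
    omega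

lemma countP_ofFn_sum (m : ℕ) (f : Fin m → ℝ) (p : ℝ → Bool) :
    (List.ofFn f).countP p = ∑ i : Fin m, (if p (f i) then 1 else 0) := by
  induction m with
  | zero => simp
  | succ m ih =>
    rw [List.ofFn_succ, List.countP_cons, ih (fun i => f i.succ), Fin.sum_univ_succ]
    by_cases h : p (f 0) <;> simp [h] <;> omega

lemma os_le_iff {k : ℕ} (hk : 1 ≤ k) (hkn : k ≤ n) (t : ℝ) : orderStat k Y ω ≤ t ↔
      k ≤ ∑ i : Fin n, (if Y i ω ≤ t then 1 else 0) := by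
  rw [os_eq_get Y ω hk hkn,
    sorted_get_le_iff _ (List.pairwise_insertionSort _ _) (k-1) (by rw [os_len]; omega) t]
  have hcp : ((List.ofFn (fun i => Y i ω)).insertionSort (· ≤ ·)).countP (fun x => decide (x ≤ t))
      = (List.ofFn (fun i => Y i ω)).countP (fun x => decide (x ≤ t)) :=
    (List.perm_insertionSort _ _).countP_eq _
  rw [hcp, countP_ofFn_sum]
  simp only [decide_eq_true_eq]
  omega

lemma os_meas [MeasurableSpace Ω] (hmeas : ∀ i, Measurable (Y i)) {k : ℕ} (hk : 1 ≤ k)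
    (hkn : k ≤ n) : Measurable (orderStat k Y) := by
  apply measurable_of_Iic
  intro t
  have hset : orderStat k Y ⁻¹' Set.Iic t
      = {ω | k ≤ ∑ i : Fin n, (if Y i ω ≤ t then 1 else 0)} := by
    ext ω
    simp only [Set.mem_preimage, Set.mem_Iic, Set.mem_setOf_eq]
    exact os_le_iff Y ω hk hkn t
  rw [hset]
  have hN : Measurable (fun ω => ∑ i : Fin n, (if Y i ω ≤ t then 1 else 0) : Ω → ℕ) := by
    apply Finset.measurable_sum
    intro i _
    exact Measurable.ite ((hmeas i) measurableSet_Iic) measurable_const measurable_const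
  exact hN measurableSet_Ici

end helpers

section integral
variable {Ω : Type*} [MeasurableSpace Ω] (P : Measure Ω) [IsProbabilityMeasure P]

lemma abs_int_le_sqrt (Z : Ω → ℝ) (hZ : MemLp Z 2 P) :
    ∫ ω, |Z ω| ∂P ≤ Real.sqrt (∫ ω, (Z ω) ^ 2 ∂P) := by
  have habs : MemLp (fun ω => |Z ω|) 2 P := hZ.abs
  have h1 := variance_nonneg (fun ω => |Z ω|) P
  have h2 := variance_eq_sub (μ := P) habs
  rw [h2] at h1
  simp only [Pi.pow_apply, sq_abs] at h1
  have h4 : (∫ ω, |Z ω| ∂P) ^ 2 ≤ ∫ ω, (Z ω) ^ 2 ∂P := by linarith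
  have h5 : 0 ≤ ∫ ω, |Z ω| ∂P := integral_nonneg fun ω => abs_nonneg _
  exact (Real.le_sqrt h5 (integral_nonneg fun ω => sq_nonneg _)).mpr h4

lemma sq_int_eq (Z : Ω → ℝ) (hZ : MemLp Z 2 P) (μb σb t : ℝ)
    (hmean : ∫ ω, Z ω ∂P = μb) (hvar : variance Z P = σb ^ 2) :
    ∫ ω, (Z ω - t) ^ 2 ∂P = σb ^ 2 + (μb - t) ^ 2 := by
  have hZint : Integrable Z P := hZ.integrable (by norm_num)
  have hZsq : Integrable (fun ω => Z ω ^ 2) P := hZ.integrable_sq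
  have h2 := variance_eq_sub (μ := P) hZ
  simp only [Pi.pow_apply, hmean, hvar] at h2
  have hexp : ∀ ω, (Z ω - t) ^ 2 = Z ω ^ 2 - (2*t) * Z ω + t ^ 2 := by intro ω; ring
  simp only [hexp]
  rw [integral_add (by exact (hZsq.sub (hZint.const_mul (2*t)))) (integrable_const _),
    integral_sub hZsq (hZint.const_mul (2*t)), MeasureTheory.integral_const_mul, hmean,
    integral_const]
  simp only [measure_univ, probReal_univ, ENNReal.toReal_one, smul_eq_mul, one_mul]
  nlinarith [h2]

lemma pospart_int_le (Z : Ω → ℝ) (hZ : MemLp Z 2 P) (μb σb t : ℝ)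
    (hmean : ∫ ω, Z ω ∂P = μb) (hvar : variance Z P = σb ^ 2) :
    ∫ ω, max (Z ω - t) 0 ∂P ≤ ((μb - t) + Real.sqrt (σb ^ 2 + (μb - t) ^ 2)) / 2 := by
  have hZint : Integrable Z P := hZ.integrable (by norm_num)
  have hZt : Integrable (fun ω => Z ω - t) P := hZint.sub (integrable_const t)
  have habs : Integrable (fun ω => |Z ω - t|) P := hZt.abs
  have hmaxeq : ∀ ω, max (Z ω - t) 0 = ((Z ω - t) + |Z ω - t|) / 2 := by
    intro ω; rcases le_or_gt (Z ω - t) 0 with h | h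
    · rw [max_eq_right h, abs_of_nonpos h]; ring
    · rw [max_eq_left h.le, abs_of_pos h]; ring
  simp only [hmaxeq]
  rw [integral_div, integral_add hZt habs]
  have h1 : ∫ ω, (Z ω - t) ∂P = μb - t := by
    rw [integral_sub hZint (integrable_const t), hmean, integral_const]; simp
  have h2 : ∫ ω, |Z ω - t| ∂P ≤ Real.sqrt (σb ^ 2 + (μb - t) ^ 2) := by
    have := abs_int_le_sqrt P (fun ω => Z ω - t) (hZ.sub (memLp_const t))
    rwa [sq_int_eq P Z hZ μb σb t hmean hvar] at this
  rw [h1]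
  linarith

variable {n : ℕ} (Y : Fin n → Ω → ℝ)

lemma os_integrable (hmeas : ∀ i, Measurable (Y i)) (hL2 : ∀ i, MemLp (Y i) 2 P)
    {k : ℕ} (hk : 1 ≤ k) (hkn : k ≤ n) : Integrable (orderStat k Y) P := by
  apply Integrable.mono' (g := fun ω => ∑ i, |Y i ω|)
  · exact integrable_finset_sum _ fun i _ => ((hL2 i).integrable (by norm_num)).abs
  · exact (os_meas Y hmeas hk hkn).aestronglyMeasurable
  · exact ae_of_all _ fun ω => by
      rw [Real.norm_eq_abs]; exact os_abs_le Y ω hk hkn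

lemma os_int_le (hmeas : ∀ i, Measurable (Y i)) (hL2 : ∀ i, MemLp (Y i) 2 P)
    (μb σb : ℝ) (hmean : ∀ i, ∫ ω, Y i ω ∂P = μb) (hvar : ∀ i, variance (Y i) P = σb ^ 2)
    {k : ℕ} (hk : 1 ≤ k) (hkn : k ≤ n) (t : ℝ) :
    ∫ ω, orderStat k Y ω ∂P ≤
      t + ((n:ℝ) - k + 1)⁻¹ * ((n:ℝ) * (((μb - t) + Real.sqrt (σb^2 + (μb - t)^2)) / 2)) := by
  have hposi : ∀ i : Fin n, Integrable (fun ω => max (Y i ω - t) 0) P := fun i =>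
    (((hL2 i).integrable (by norm_num)).sub (integrable_const t)).pos_part
  have hRHS : Integrable (fun ω => t + ((n:ℝ) - k + 1)⁻¹ * ∑ i, max (Y i ω - t) 0) P :=
    (integrable_const t).add ((integrable_finset_sum _ fun i _ => hposi i).const_mul _)
  have hmono := integral_mono (os_integrable P Y hmeas hL2 hk hkn) hRHS
    (fun ω => os_key Y ω t hk hkn)
  have hkR : (k:ℝ) ≤ n := by exact_mod_cast hkn
  have hc : (0:ℝ) ≤ ((n:ℝ) - k + 1)⁻¹ := by
    apply inv_nonneg.mpr; linarith
  have heval : ∫ ω, (t + ((n:ℝ) - k + 1)⁻¹ * ∑ i, max (Y i ω - t) 0) ∂P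
      = t + ((n:ℝ) - k + 1)⁻¹ * ∑ i : Fin n, ∫ ω, max (Y i ω - t) 0 ∂P := by
    rw [integral_add (integrable_const t)
      ((integrable_finset_sum _ fun i _ => hposi i).const_mul _), integral_const,
      MeasureTheory.integral_const_mul, integral_finset_sum _ fun i _ => hposi i]
    simp
  rw [heval] at hmono
  have hsumle : ∑ i : Fin n, ∫ ω, max (Y i ω - t) 0 ∂P
      ≤ (n:ℝ) * (((μb - t) + Real.sqrt (σb^2 + (μb - t)^2)) / 2) := by
    calc ∑ i : Fin n, ∫ ω, max (Y i ω - t) 0 ∂P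
        ≤ ∑ _i : Fin n, ((μb - t) + Real.sqrt (σb^2 + (μb - t)^2)) / 2 :=
          Finset.sum_le_sum fun i _ => pospart_int_le P (Y i) (hL2 i) μb σb t (hmean i) (hvar i)
      _ = (n:ℝ) * (((μb - t) + Real.sqrt (σb^2 + (μb - t)^2)) / 2) := by
          rw [Finset.sum_const, Finset.card_univ, Fintype.card_fin, nsmul_eq_mul]
  calc ∫ ω, orderStat k Y ω ∂P ≤ _ := hmono
    _ ≤ _ := by
        have := mul_le_mul_of_nonneg_left hsumle hc
        linarith

end integral

lemma alg_sqrt (μ a b σ : ℝ) (ha : 0 < a) (hb : 0 < b) (hσ : 0 ≤ σ) :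
    (μ - σ*(b-a)/(2*Real.sqrt (a*b)))
      + b⁻¹ * ((a+b) * (((σ*(b-a)/(2*Real.sqrt (a*b)))
        + Real.sqrt (σ^2 + (σ*(b-a)/(2*Real.sqrt (a*b)))^2))/2))
      = μ + σ * Real.sqrt a / Real.sqrt b := by
  set D := Real.sqrt (a*b) with hD
  have hDpos : 0 < D := Real.sqrt_pos.mpr (by positivity)
  have hD2 : D^2 = a*b := Real.sq_sqrt (by positivity)
  have h1 : σ^2 + (σ*(b-a)/(2*D))^2 = (σ*(a+b)/(2*D))^2 := by
    field_simp
    nlinarith [hD2]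
  have h2 : Real.sqrt (σ^2 + (σ*(b-a)/(2*D))^2) = σ*(a+b)/(2*D) := by
    rw [h1, Real.sqrt_sq (by positivity)]
  rw [h2]
  have h3 : σ * a / D = σ * Real.sqrt a / Real.sqrt b := by
    rw [hD, Real.sqrt_mul ha.le]
    have hsa : Real.sqrt a ≠ 0 := ne_of_gt (Real.sqrt_pos.mpr ha)
    have hsb : Real.sqrt b ≠ 0 := ne_of_gt (Real.sqrt_pos.mpr hb)
    have haa : Real.sqrt a * Real.sqrt a = a := Real.mul_self_sqrt ha.le
    field_simp
    linear_combination (-σ) * haa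
  rw [← h3]
  field_simp
  ring

lemma AG_gen {Ω : Type*} [MeasurableSpace Ω] (P : Measure Ω) [IsProbabilityMeasure P]
    (n : ℕ) (hn : 0 < n) (k : ℕ) (hk : 1 ≤ k) (hkn : k ≤ n)
    (μb σb : ℝ) (hσb : 0 ≤ σb)
    (Y : Fin n → Ω → ℝ)
    (hmeas : ∀ i, Measurable (Y i))
    (hL2 : ∀ i, MemLp (Y i) 2 P)
    (hmean : ∀ i, ∫ ω, Y i ω ∂P = μb)
    (hvar : ∀ i, variance (Y i) P = σb ^ 2) :
    ∫ ω, orderStat k Y ω ∂P ≤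
      μb + σb * Real.sqrt ((k:ℝ) - 1) / Real.sqrt ((n:ℝ) - k + 1) := by
  rcases eq_or_lt_of_le hk with h1 | h2
  · -- k = 1
    subst h1
    have i0 : Fin n := ⟨0, hn⟩
    have hle : ∫ ω, orderStat 1 Y ω ∂P ≤ ∫ ω, Y i0 ω ∂P :=
      integral_mono (os_integrable P Y hmeas hL2 le_rfl hkn)
        ((hL2 i0).integrable (by norm_num)) (fun ω => os_one_le Y ω i0)
    rw [hmean i0] at hle
    simpa using hle
  · -- 2 ≤ k
    have hk2 : 2 ≤ k := h2
    set a : ℝ := (k:ℝ) - 1 with hadef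
    set b : ℝ := (n:ℝ) - k + 1 with hbdef
    have hkR : (k:ℝ) ≤ n := by exact_mod_cast hkn
    have hk2R : (2:ℝ) ≤ k := by exact_mod_cast hk2
    have ha : 0 < a := by rw [hadef]; linarith
    have hb : 0 < b := by rw [hbdef]; linarith
    have hab : a + b = (n:ℝ) := by rw [hadef, hbdef]; ring
    set u : ℝ := σb*(b-a)/(2*Real.sqrt (a*b)) with hudef
    have hmt : μb - (μb - u) = u := by ring
    have := os_int_le P Y hmeas hL2 μb σb hmean hvar hk hkn (μb - u)
    rw [hmt] at this
    calc ∫ ω, orderStat k Y ω ∂P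
        ≤ (μb - u) + b⁻¹ * ((n:ℝ) * ((u + Real.sqrt (σb^2 + u^2)) / 2)) := this
      _ = μb + σb * Real.sqrt a / Real.sqrt b := by
          rw [← hab, hudef]
          exact alg_sqrt μb a b σb ha hb hσb

/-- Arnold–Groeneveld bound: for i.i.d. square-integrable `Y_i` with mean `μ_b` and
standard deviation `σ_b`, `E[Y_{k:n}] ≤ μ_b + σ_b √((k-1)n/(n-k+1)) / √n`; in particular
`E[Y_{n:n}] ≤ μ_b + σ_b √(n-1)`. -/
theorem arnold_groeneveld_bound
    {Ω : Type*} [MeasurableSpace Ω] (P : Measure Ω) [IsProbabilityMeasure P]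
    (n : ℕ) (hn : 0 < n) (k : ℕ) (hk : 1 ≤ k) (hkn : k ≤ n)
    (μb σb : ℝ) (hσb : 0 ≤ σb)
    (Y : Fin n → Ω → ℝ)
    (hmeas : ∀ i, Measurable (Y i))
    (hindep : iIndepFun Y P)
    (hident : ∀ i j, Measure.map (Y i) P = Measure.map (Y j) P)
    (hL2 : ∀ i, MemLp (Y i) 2 P)
    (hmean : ∀ i, ∫ ω, Y i ω ∂P = μb)
    (hvar : ∀ i, variance (Y i) P = σb ^ 2) :
    ∫ ω, orderStat k Y ω ∂P ≤
        μb + σb * Real.sqrt (((k : ℝ) - 1) * n / ((n : ℝ) - k + 1)) * (1 / Real.sqrt n) ∧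
    ∫ ω, orderStat n Y ω ∂P ≤ μb + σb * Real.sqrt ((n : ℝ) - 1) := by
  have hnR : (0:ℝ) < n := by exact_mod_cast hn
  have hsn : Real.sqrt n ≠ 0 := ne_of_gt (Real.sqrt_pos.mpr hnR)
  constructor
  · have hgen := AG_gen P n hn k hk hkn μb σb hσb Y hmeas hL2 hmean hvar
    have hkR : (k:ℝ) ≤ n := by exact_mod_cast hkn
    have hk1 : (1:ℝ) ≤ k := by exact_mod_cast hk
    have hb : (0:ℝ) < (n:ℝ) - k + 1 := by linarith
    have hsb : Real.sqrt ((n:ℝ) - k + 1) ≠ 0 := ne_of_gt (Real.sqrt_pos.mpr hb)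
    have heq : μb + σb * Real.sqrt ((k:ℝ) - 1) / Real.sqrt ((n:ℝ) - k + 1)
        = μb + σb * Real.sqrt (((k : ℝ) - 1) * n / ((n : ℝ) - k + 1)) * (1 / Real.sqrt n) := by
      rw [Real.sqrt_div (mul_nonneg (by linarith) hnR.le),
        Real.sqrt_mul (by linarith : (0:ℝ) ≤ (k:ℝ) - 1)]
      field_simp
    calc ∫ ω, orderStat k Y ω ∂P
        ≤ μb + σb * Real.sqrt ((k:ℝ) - 1) / Real.sqrt ((n:ℝ) - k + 1) := hgen
      _ = μb + σb * Real.sqrt (((k : ℝ) - 1) * n / ((n : ℝ) - k + 1)) * (1 / Real.sqrt n) := heq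
  · have hgen := AG_gen P n hn n hn le_rfl μb σb hσb Y hmeas hL2 hmean hvar
    have heq : Real.sqrt ((n:ℝ) - n + 1) = 1 := by
      norm_num
    calc ∫ ω, orderStat n Y ω ∂P
        ≤ μb + σb * Real.sqrt ((n:ℝ) - 1) / Real.sqrt ((n:ℝ) - n + 1) := hgen
      _ = μb + σb * Real.sqrt ((n:ℝ) - 1) := by rw [heq]; ring
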